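/- With the same setup (n = (sinφ, −cosφ, 0), U₁ = R_n(θ), U₂ = R_n(θ+π), 0 ≤ θ, 0 ≤ φ ≤ π/2, and |±y⟩ = (|0⟩ ± i|1⟩)/√2), one has ½|⟨+y|U₁|+⟩|² + ½|⟨−y|U₂|+⟩|² = ½(1 + ½ sin(2φ) cosθ) ≤ ½(1 + cosθ). -/

import Mathlib

open Matrix

noncomputable section

def sigmaX : Matrix (Fin 2) (Fin 2) ℂ := !![0, 1; 1, 0]
def sigmaY : Matrix (Fin 2) (Fin 2) ℂ := !![0, -Complex.I; Complex.I, 0]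
def sigmaZ : Matrix (Fin 2) (Fin 2) ℂ := !![1, 0; 0, -1]

def rot (n : ℝ × ℝ × ℝ) (α : ℝ) : Matrix (Fin 2) (Fin 2) ℂ :=
  NormedSpace.exp ((-(α / 2 : ℝ) * Complex.I) •
    ((n.1 : ℂ) • sigmaX + (n.2.1 : ℂ) • sigmaY + (n.2.2 : ℂ) • sigmaZ))

def amp (u : Fin 2 → ℂ) (M : Matrix (Fin 2) (Fin 2) ℂ) (v : Fin 2 → ℂ) : ℂ :=
  ∑ a, ∑ b, (starRingEnd ℂ) (u a) * M a b * v b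

def ketPlus : Fin 2 → ℂ := ![(1 / Real.sqrt 2 : ℝ), (1 / Real.sqrt 2 : ℝ)]
def ketPlusY : Fin 2 → ℂ := ![(1 / Real.sqrt 2 : ℝ), Complex.I * (1 / Real.sqrt 2 : ℝ)]
def ketMinusY : Fin 2 → ℂ := ![(1 / Real.sqrt 2 : ℝ), -Complex.I * (1 / Real.sqrt 2 : ℝ)]

lemma exp_key (w : ℂ) (hw : w * (starRingEnd ℂ) w = 1) (z : ℂ) :
    NormedSpace.exp (z • !![(0:ℂ), w; (starRingEnd ℂ) w, 0]) =
      !![(Complex.exp z + Complex.exp (-z))/2, w * ((Complex.exp z - Complex.exp (-z))/2);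
         (starRingEnd ℂ) w * ((Complex.exp z - Complex.exp (-z))/2),
         (Complex.exp z + Complex.exp (-z))/2] := by
  set wb := (starRingEnd ℂ) w with hwb
  set P : Matrix (Fin 2) (Fin 2) ℂ := !![1, 1; wb, -wb] with hP
  set Q : Matrix (Fin 2) (Fin 2) ℂ := !![1/2, w/2; 1/2, -(w/2)] with hQ
  clear_value wb P Q
  have hPQ : P * Q = 1 := by
    rw [hP, hQ, Matrix.mul_fin_two]
    ext i j
    fin_cases i <;> fin_cases j <;>
      simp [Matrix.one_apply] <;>
      first | linear_combination (0:ℂ) * hw | linear_combination hw / 2 | linear_combination -hw / 2 | linear_combination hw | linear_combination -hw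
  have hQP : Q * P = 1 := by
    rw [hP, hQ, Matrix.mul_fin_two]
    ext i j
    fin_cases i <;> fin_cases j <;>
      simp [Matrix.one_apply] <;>
      first | linear_combination (0:ℂ) * hw | linear_combination hw / 2 | linear_combination -hw / 2 | linear_combination hw | linear_combination -hw
  have hinv : P⁻¹ = Q := Matrix.inv_eq_right_inv hPQ
  have hunit : IsUnit P := by
    exact Matrix.isUnit_iff_isUnit_det P |>.mpr (by
      have := hPQ
      exact IsUnit.of_mul_eq_one _ (by rw [← Matrix.det_mul, hPQ, Matrix.det_one]))
  have hdiag : !![z, 0; 0, -z] = Matrix.diagonal ![z, -z] := by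
    ext i j
    fin_cases i <;> fin_cases j <;> simp [Matrix.diagonal]
  have hconj : z • !![(0:ℂ), w; wb, 0] = P * Matrix.diagonal ![z, -z] * P⁻¹ := by
    rw [hinv, ← hdiag, hP, hQ, Matrix.mul_fin_two, Matrix.mul_fin_two]
    ext i j
    fin_cases i <;> fin_cases j <;>
      simp [Matrix.smul_apply] <;>
      first
        | ring | linear_combination z * hw / 2 | linear_combination -z * hw / 2
        | linear_combination z * hw | linear_combination -z * hw
  rw [hconj, Matrix.exp_conj P (Matrix.diagonal ![z, -z]) hunit, Matrix.exp_diagonal, hinv]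
  have hv : NormedSpace.exp (![z, -z]) = ![Complex.exp z, Complex.exp (-z)] := by
    rw [Pi.exp_def]
    funext i
    fin_cases i <;> simp [← Complex.exp_eq_exp_ℂ]
  rw [hv]
  have hdiag2 : Matrix.diagonal ![Complex.exp z, Complex.exp (-z)] =
      !![Complex.exp z, 0; 0, Complex.exp (-z)] := by
    ext i j
    fin_cases i <;> fin_cases j <;> simp [Matrix.diagonal]
  rw [hdiag2, hP, hQ, Matrix.mul_fin_two, Matrix.mul_fin_two]
  ext i j
  fin_cases i <;> fin_cases j <;> simp <;>
    first
      | linear_combination (0:ℂ) * hw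
      | linear_combination ((Complex.exp z + Complex.exp (-z))/2) * hw
      | linear_combination (-(Complex.exp z + Complex.exp (-z))/2) * hw
      | linear_combination ((Complex.exp z - Complex.exp (-z))/2) * hw
      | linear_combination (-(Complex.exp z - Complex.exp (-z))/2) * hw

lemma rot_eq (φ α : ℝ) :
    rot (Real.sin φ, -Real.cos φ, 0) α =
      !![(Real.cos (α/2) : ℂ),
         -Complex.I * Real.sin (α/2) * (Real.sin φ + Complex.I * Real.cos φ);
         -Complex.I * Real.sin (α/2) * (Real.sin φ - Complex.I * Real.cos φ),
         (Real.cos (α/2) : ℂ)] := by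
  set w : ℂ := Real.sin φ + Complex.I * Real.cos φ with hwdef
  have hcw : (starRingEnd ℂ) w = Real.sin φ - Complex.I * Real.cos φ := by
    rw [hwdef, map_add (starRingEnd ℂ), _root_.map_mul]
    rw [Complex.conj_ofReal, Complex.conj_ofReal, Complex.conj_I]
    ring
  have h1 : ((Real.sin φ : ℂ))^2 + ((Real.cos φ : ℂ))^2 = 1 := by
    exact_mod_cast congrArg (Complex.ofReal) (Real.sin_sq_add_cos_sq φ)
  have hw : w * (starRingEnd ℂ) w = 1 := by
    rw [hcw, hwdef]
    linear_combination h1 - (Real.cos φ:ℂ)^2 * Complex.I_sq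
  have hA : ((Real.sin φ : ℝ) : ℂ) • sigmaX + ((-Real.cos φ : ℝ) : ℂ) • sigmaY
      + ((0:ℝ) : ℂ) • sigmaZ = !![(0:ℂ), w; (starRingEnd ℂ) w, 0] := by
    rw [hcw, hwdef]
    ext i j
    fin_cases i <;> fin_cases j <;>
      simp [sigmaX, sigmaY, sigmaZ, Matrix.smul_apply] <;> push_cast <;> ring
  have hzz : (-(((α / 2 : ℝ)):ℂ) * Complex.I) = ((↑(-(α / 2)) : ℝ) : ℂ) * Complex.I := by
    push_cast; ring
  have hez : Complex.exp (-(((α / 2 : ℝ)):ℂ) * Complex.I)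
      = (Real.cos (α/2) : ℂ) - (Real.sin (α/2) : ℂ) * Complex.I := by
    rw [hzz, Complex.exp_mul_I, ← Complex.ofReal_cos, ← Complex.ofReal_sin]
    push_cast [Real.cos_neg, Real.sin_neg]; ring
  have hez' : Complex.exp (-(-(((α / 2 : ℝ)):ℂ) * Complex.I))
      = (Real.cos (α/2) : ℂ) + (Real.sin (α/2) : ℂ) * Complex.I := by
    rw [hzz, ← neg_mul, ← Complex.ofReal_neg, Complex.exp_mul_I, ← Complex.ofReal_cos,
      ← Complex.ofReal_sin]
    push_cast [Real.cos_neg, Real.sin_neg]; ring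
  show NormedSpace.exp ((-(((α / 2 : ℝ)):ℂ) * Complex.I) • _) = _
  rw [hA, exp_key w hw, hez, hez', hcw, hwdef]
  ext i j
  fin_cases i <;> fin_cases j <;> simp <;> ring

lemma norm_sq_ofReal_add_mul_I (a b : ℝ) : ‖((a : ℂ) + (b : ℂ) * Complex.I)‖^2 = a^2 + b^2 := by
  rw [Complex.sq_norm, Complex.normSq_add_mul_I]

/-- The Y-basis measurement check in the single-qubit magic discrimination
bound. -/
theorem magic_qubit_y_basis_check (θ φ : ℝ)
    (hθ0 : 0 ≤ θ) (hθ1 : θ ≤ Real.arccos (1 / Real.sqrt 3)) (hφ0 : 0 ≤ φ) (hφ1 : φ ≤ Real.pi / 2) :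
    let n : ℝ × ℝ × ℝ := (Real.sin φ, -Real.cos φ, 0)
    let U₁ := rot n θ
    let U₂ := rot n (θ + Real.pi)
    (1 / 2) * ‖amp ketPlusY U₁ ketPlus‖ ^ 2
        + (1 / 2) * ‖amp ketMinusY U₂ ketPlus‖ ^ 2
      = (1 / 2) * (1 + (1 / 2) * Real.sin (2 * φ) * Real.cos θ) ∧
    (1 / 2) * (1 + (1 / 2) * Real.sin (2 * φ) * Real.cos θ)
      ≤ (1 / 2) * (1 + Real.cos θ) := by
  intro n U₁ U₂
  have hU1eq : U₁ = rot (Real.sin φ, -Real.cos φ, 0) θ := rfl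
  have hU2eq : U₂ = rot (Real.sin φ, -Real.cos φ, 0) (θ + Real.pi) := rfl
  have k2 : ((1 / Real.sqrt 2 : ℝ) : ℂ) ^ 2 = ((1/2 : ℝ) : ℂ) := by
    have h : (1 / Real.sqrt 2 : ℝ) ^ 2 = 1 / 2 := by
      rw [div_pow, one_pow, Real.sq_sqrt] <;> norm_num
    exact_mod_cast congrArg Complex.ofReal h
  set c := Real.cos (θ/2) with hc
  set s := Real.sin (θ/2) with hs
  have hc2 : Real.cos ((θ + Real.pi)/2) = -s := by
    rw [show (θ + Real.pi)/2 = θ/2 + Real.pi/2 by ring, Real.cos_add_pi_div_two]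
  have hs2 : Real.sin ((θ + Real.pi)/2) = c := by
    rw [show (θ + Real.pi)/2 = θ/2 + Real.pi/2 by ring, Real.sin_add_pi_div_two]
  have e1 : amp ketPlusY U₁ ketPlus
      = ((1/2:ℝ):ℂ) * (↑(c + s * (Real.cos φ - Real.sin φ))
        + ↑(s * (Real.cos φ - Real.sin φ) - c) * Complex.I) := by
    rw [hU1eq, rot_eq, ← k2]
    simp only [amp, Fin.sum_univ_two, ketPlusY, ketPlus, Matrix.cons_val_zero,
      Matrix.cons_val_one, Matrix.head_cons, Matrix.cons_val', Matrix.empty_val',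
      Matrix.cons_val_fin_one, Matrix.head_fin_const, Matrix.of_apply,
      _root_.map_mul, Complex.conj_I, Complex.conj_ofReal, ← hc, ← hs]
    push_cast
    ring_nf
    simp only [show (Complex.I)^3 = -Complex.I by rw [pow_succ, Complex.I_sq]; ring,
      Complex.I_sq]
    ring
  have e2 : amp ketMinusY U₂ ketPlus
      = ((1/2:ℝ):ℂ) * (↑(-s + c * (Real.cos φ + Real.sin φ))
        + ↑(-s - c * (Real.cos φ + Real.sin φ)) * Complex.I) := by
    rw [hU2eq, rot_eq, ← k2]
    simp only [amp, Fin.sum_univ_two, ketMinusY, ketPlus, Matrix.cons_val_zero,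
      Matrix.cons_val_one, Matrix.head_cons, Matrix.cons_val', Matrix.empty_val',
      Matrix.cons_val_fin_one, Matrix.head_fin_const, Matrix.of_apply,
      _root_.map_mul, Complex.conj_I, Complex.conj_ofReal, map_neg,
      hc2, hs2]
    push_cast
    ring_nf
    simp only [show (Complex.I)^3 = -Complex.I by rw [pow_succ, Complex.I_sq]; ring,
      Complex.I_sq]
    ring
  have n1 : ‖amp ketPlusY U₁ ketPlus‖^2
      = (1/4) * ((c + s * (Real.cos φ - Real.sin φ))^2
          + (s * (Real.cos φ - Real.sin φ) - c)^2) := by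
    rw [e1, norm_mul, mul_pow, norm_sq_ofReal_add_mul_I, Complex.norm_real]
    norm_num
  have n2 : ‖amp ketMinusY U₂ ketPlus‖^2
      = (1/4) * ((-s + c * (Real.cos φ + Real.sin φ))^2
          + (-s - c * (Real.cos φ + Real.sin φ))^2) := by
    rw [e2, norm_mul, mul_pow, norm_sq_ofReal_add_mul_I, Complex.norm_real]
    norm_num
  have hp : s^2 + c^2 = 1 := Real.sin_sq_add_cos_sq (θ/2)
  have hpφ : Real.sin φ^2 + Real.cos φ^2 = 1 := Real.sin_sq_add_cos_sq φ
  have h2φ : Real.sin (2*φ) = 2 * Real.sin φ * Real.cos φ := Real.sin_two_mul φ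
  have hcθ : Real.cos θ = 2 * c^2 - 1 := by
    have h := Real.cos_sq (θ/2)
    rw [show 2*(θ/2) = θ by ring] at h
    rw [hc]; linarith
  constructor
  · rw [n1, n2]
    linear_combination (1/2 + (Real.cos φ^2 + Real.sin φ^2 - 1)/4
        - Real.sin φ * Real.cos φ/2) * hp + (1/4) * hpφ
      + (-(Real.cos θ)/4) * h2φ + (-(Real.sin φ * Real.cos φ)/2) * hcθ
  · have hφ2 : Real.sin (2*φ) ≤ 1 := Real.sin_le_one _
    have harc : Real.arccos (1 / Real.sqrt 3) ≤ Real.pi / 2 :=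
      Real.arccos_le_pi_div_two.2 (by positivity)
    have hcos : 0 ≤ Real.cos θ := by
      apply Real.cos_nonneg_of_mem_Icc
      constructor
      · linarith [Real.pi_pos]
      · linarith
    nlinarith [mul_nonneg hcos (by linarith : (0:ℝ) ≤ 1 - Real.sin (2*φ)/2)]

end
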